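/- arXiv:2207.07719 — 2 statements merged into one kernel-verified Lean document; each statement's English description precedes it below -/
import Mathlib

section
/- Let Φ_X, Φ_Y ∈ ℝ^{N×N_d} have full column rank and let R ∈ ℝ^{N_d×N_d} be invertible. Then the consistency matrix M̃_C built from Φ_X R and Φ_Y R has the same spectrum (set of complex eigenvalues) as the consistency matrix M_C built from Φ_X and Φ_Y: spec(M̃_C) = spec(M_C). -/
open Matrix

/-- Moore–Penrose pseudoinverse of a full-column-rank matrix: `A† = (AᵀA)⁻¹Aᵀ`. -/
noncomputable def pinv {N Nd : ℕ} (A : Matrix (Fin N) (Fin Nd) ℝ) :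
    Matrix (Fin Nd) (Fin N) ℝ := (Aᵀ * A)⁻¹ * Aᵀ

lemma pinv_mul_right {N Nd : ℕ} (A : Matrix (Fin N) (Fin Nd) ℝ)
    (R : Matrix (Fin Nd) (Fin Nd) ℝ) (hR : IsUnit R) :
    pinv (A * R) = R⁻¹ * pinv A := by
  have hRT : IsUnit Rᵀ := (Matrix.isUnit_iff_isUnit_det _).mpr (by rw [Matrix.det_transpose]; exact (Matrix.isUnit_iff_isUnit_det _).mp hR)
  unfold pinv
  have h1 : (A * R)ᵀ * (A * R) = Rᵀ * (Aᵀ * A) * R := by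
    rw [transpose_mul]; simp only [Matrix.mul_assoc]
  rw [h1, transpose_mul, Matrix.mul_inv_rev, Matrix.mul_inv_rev]
  have : (Rᵀ)⁻¹ * (Rᵀ * Aᵀ) = Aᵀ := by
    rw [← Matrix.mul_assoc, Matrix.nonsing_inv_mul _ (isUnit_iff_isUnit_det _ |>.mp hRT),
      Matrix.one_mul]
  rw [Matrix.mul_assoc, Matrix.mul_assoc, this]

/-- The spectrum of the consistency matrix is invariant under a change of basis. -/
theorem consistency_matrix_spectrum_invariant {N Nd : ℕ} (ΦX ΦY : Matrix (Fin N) (Fin Nd) ℝ)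
    (R : Matrix (Fin Nd) (Fin Nd) ℝ)
    (hX : IsUnit (ΦXᵀ * ΦX)) (hY : IsUnit (ΦYᵀ * ΦY)) (hR : IsUnit R) :
    spectrum ℂ
      (((1 : Matrix (Fin Nd) (Fin Nd) ℝ) -
        pinv (ΦX * R) * (ΦY * R) * (pinv (ΦY * R) * (ΦX * R))).map Complex.ofReal) =
    spectrum ℂ
      (((1 : Matrix (Fin Nd) (Fin Nd) ℝ) -
        pinv ΦX * ΦY * (pinv ΦY * ΦX)).map Complex.ofReal) := by
  have hRdet : IsUnit R.det := (isUnit_iff_isUnit_det _).mp hR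
  have hRinv : R⁻¹ * R = 1 := Matrix.nonsing_inv_mul _ hRdet
  have hRinv' : R * R⁻¹ = 1 := Matrix.mul_nonsing_inv _ hRdet
  set M := (1 : Matrix (Fin Nd) (Fin Nd) ℝ) - pinv ΦX * ΦY * (pinv ΦY * ΦX) with hM
  have key : (1 : Matrix (Fin Nd) (Fin Nd) ℝ) -
      pinv (ΦX * R) * (ΦY * R) * (pinv (ΦY * R) * (ΦX * R)) = R⁻¹ * M * R := by
    rw [pinv_mul_right ΦX R hR, pinv_mul_right ΦY R hR, hM]
    have e : R⁻¹ * pinv ΦX * (ΦY * R) * (R⁻¹ * pinv ΦY * (ΦX * R))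
        = R⁻¹ * (pinv ΦX * ΦY * (pinv ΦY * ΦX)) * R := by
      calc R⁻¹ * pinv ΦX * (ΦY * R) * (R⁻¹ * pinv ΦY * (ΦX * R))
          = R⁻¹ * (pinv ΦX * (ΦY * ((R * R⁻¹) * (pinv ΦY * ΦX)))) * R := by
            simp only [Matrix.mul_assoc]
        _ = R⁻¹ * (pinv ΦX * ΦY * (pinv ΦY * ΦX)) * R := by
            rw [hRinv']; simp only [Matrix.one_mul, Matrix.mul_assoc]
    rw [e, Matrix.mul_sub, Matrix.sub_mul, Matrix.mul_one, hRinv]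
  rw [key]
  -- now map and use spectrum invariance under conjugation
  let f : ℝ →+* ℂ := Complex.ofRealHom
  have hmap : ∀ (A B : Matrix (Fin Nd) (Fin Nd) ℝ),
      (A * B).map f = A.map f * B.map f := fun A B => Matrix.map_mul
  have hone : ((1 : Matrix (Fin Nd) (Fin Nd) ℝ)).map f = 1 := Matrix.map_one f f.map_zero f.map_one
  let u : (Matrix (Fin Nd) (Fin Nd) ℂ)ˣ :=
    ⟨R.map f, (R⁻¹).map f, by rw [← hmap, hRinv', hone], by rw [← hmap, hRinv, hone]⟩
  have key2 : (R⁻¹ * M * R).map Complex.ofReal = (↑u⁻¹ : Matrix (Fin Nd) (Fin Nd) ℂ) * (M.map Complex.ofReal) * (↑u : Matrix (Fin Nd) (Fin Nd) ℂ) := by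
    show (R⁻¹ * M * R).map f = (R⁻¹).map f * M.map f * R.map f
    rw [hmap, hmap]
  rw [key2]
  exact spectrum.units_conjugate' (u := u)
end

section
/- Let Φ_X, Φ_Y ∈ ℝ^{N×N_d} have full column rank. Then every complex eigenvalue μ of the matrix Φ_X† Φ_Y Φ_Y† Φ_X = K_F K_B is real and satisfies 0 ≤ μ ≤ 1. -/
open Matrix

private lemma mapc_mul {m n p : ℕ} (A : Matrix (Fin m) (Fin n) ℝ) (B : Matrix (Fin n) (Fin p) ℝ) :
    (A * B).map Complex.ofReal = A.map Complex.ofReal * B.map Complex.ofReal :=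
  Matrix.map_mul (f := Complex.ofRealHom)

private lemma mapc_one {n : ℕ} : (1 : Matrix (Fin n) (Fin n) ℝ).map Complex.ofReal = 1 := by
  ext i j
  by_cases h : i = j <;> simp [Matrix.one_apply, h]

private lemma map_inv_of_isUnit {n : ℕ} (A : Matrix (Fin n) (Fin n) ℝ) (h : IsUnit A) :
    (A⁻¹).map Complex.ofReal = (A.map Complex.ofReal)⁻¹ := by
  have h1 : A * A⁻¹ = 1 := Matrix.mul_nonsing_inv A ((Matrix.isUnit_iff_isUnit_det A).mp h)
  have h2 : (A.map Complex.ofReal) * ((A⁻¹).map Complex.ofReal) = 1 := by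
    rw [← mapc_mul, h1, mapc_one]
  exact (Matrix.inv_eq_right_inv h2).symm

private lemma conjT_map {m n : ℕ} (A : Matrix (Fin m) (Fin n) ℝ) :
    (A.map Complex.ofReal)ᴴ = Aᵀ.map Complex.ofReal := by
  ext i j
  simp [Matrix.conjTranspose_apply, Complex.conj_ofReal]

private lemma dot_adj {m n : ℕ} (A : Matrix (Fin m) (Fin n) ℂ) (x : Fin n → ℂ) (y : Fin m → ℂ) :
    star (A *ᵥ x) ⬝ᵥ y = star x ⬝ᵥ (Aᴴ *ᵥ y) := by
  rw [Matrix.star_mulVec, ← Matrix.dotProduct_mulVec]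

private lemma self_dot (n : ℕ) (w : Fin n → ℂ) :
    (star w ⬝ᵥ w).im = 0 ∧ 0 ≤ (star w ⬝ᵥ w).re ∧ ((star w ⬝ᵥ w).re = 0 → w = 0) := by
  have h : star w ⬝ᵥ w = ∑ i, (Complex.normSq (w i) : ℂ) := by
    simp [dotProduct, Complex.normSq_eq_conj_mul_self]
  rw [h]
  refine ⟨by simp [Complex.im_sum], ?_, ?_⟩
  · rw [Complex.re_sum]
    exact Finset.sum_nonneg fun i _ => by simpa using Complex.normSq_nonneg (w i)
  · rw [Complex.re_sum]
    intro h0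
    have hz := (Finset.sum_eq_zero_iff_of_nonneg
      (fun i _ => by simpa using Complex.normSq_nonneg (w i))).mp h0
    funext i
    have := hz i (Finset.mem_univ i)
    simp only [Complex.ofReal_re] at this
    exact Complex.normSq_eq_zero.mp this

private lemma exists_eigvec {n : ℕ} (M : Matrix (Fin n) (Fin n) ℂ) {μ : ℂ}
    (h : μ ∈ spectrum ℂ M) : ∃ v, v ≠ 0 ∧ M *ᵥ v = μ • v := by
  rw [spectrum.mem_iff] at h
  have hdet : (μ • (1 : Matrix (Fin n) (Fin n) ℂ) - M).det = 0 := by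
    by_contra hd
    exact h (by
      have h1 : IsUnit (μ • (1 : Matrix (Fin n) (Fin n) ℂ) - M).det := isUnit_iff_ne_zero.mpr hd
      have h2 := (Matrix.isUnit_iff_isUnit_det _).mpr h1
      simpa [Algebra.algebraMap_eq_smul_one] using h2)
  obtain ⟨v, hv, hveq⟩ := (Matrix.exists_mulVec_eq_zero_iff).mpr hdet
  refine ⟨v, hv, ?_⟩
  rw [Matrix.sub_mulVec, sub_eq_zero] at hveq
  rw [← hveq, Matrix.smul_mulVec, Matrix.one_mulVec]

/-- Every complex eigenvalue of the forward-backward EDMD product lies in [0,1]. -/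
theorem fwd_bwd_spectrum_in_unit_interval {N Nd : ℕ}
    (ΦX ΦY : Matrix (Fin N) (Fin Nd) ℝ)
    (hX : IsUnit (ΦXᵀ * ΦX)) (hY : IsUnit (ΦYᵀ * ΦY)) :
    ∀ μ ∈ spectrum ℂ ((pinv ΦX * ΦY * (pinv ΦY * ΦX)).map Complex.ofReal),
      μ.im = 0 ∧ 0 ≤ μ.re ∧ μ.re ≤ 1 := by
  intro μ hμ
  set X : Matrix (Fin N) (Fin Nd) ℂ := ΦX.map Complex.ofReal with hXdef
  set Y : Matrix (Fin N) (Fin Nd) ℂ := ΦY.map Complex.ofReal with hYdef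
  set G : Matrix (Fin Nd) (Fin Nd) ℂ := Xᴴ * X with hGdef
  set H : Matrix (Fin Nd) (Fin Nd) ℂ := Yᴴ * Y with hHdef
  set P : Matrix (Fin N) (Fin N) ℂ := Y * H⁻¹ * Yᴴ with hPdef
  clear_value P H G Y X
  have e1 : (ΦXᵀ.map Complex.ofReal) = Xᴴ := by rw [hXdef, conjT_map]
  have e2 : (ΦYᵀ.map Complex.ofReal) = Yᴴ := by rw [hYdef, conjT_map]
  have e3 : ((ΦXᵀ * ΦX).map Complex.ofReal) = G := by
    rw [mapc_mul, hGdef, e1, hXdef]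
  have e4 : ((ΦYᵀ * ΦY).map Complex.ofReal) = H := by
    rw [mapc_mul, hHdef, e2, hYdef]
  -- units
  have hGu : IsUnit G := by
    have h := hX.map (RingHom.mapMatrix (Complex.ofRealHom) :
      Matrix (Fin Nd) (Fin Nd) ℝ →+* Matrix (Fin Nd) (Fin Nd) ℂ)
    rw [RingHom.mapMatrix_apply] at h
    rwa [show ((ΦXᵀ * ΦX).map (Complex.ofRealHom : ℝ →+* ℂ)) = G from e3] at h
  have hHu : IsUnit H := by
    have h := hY.map (RingHom.mapMatrix (Complex.ofRealHom) :
      Matrix (Fin Nd) (Fin Nd) ℝ →+* Matrix (Fin Nd) (Fin Nd) ℂ)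
    rw [RingHom.mapMatrix_apply] at h
    rwa [show ((ΦYᵀ * ΦY).map (Complex.ofRealHom : ℝ →+* ℂ)) = H from e4] at h
  have hGdet := (Matrix.isUnit_iff_isUnit_det G).mp hGu
  have hHdet := (Matrix.isUnit_iff_isUnit_det H).mp hHu
  -- rewrite the mapped matrix
  have hM : ((pinv ΦX * ΦY * (pinv ΦY * ΦX)).map Complex.ofReal) = G⁻¹ * (Xᴴ * P * X) := by
    simp only [pinv, mapc_mul]
    rw [map_inv_of_isUnit _ hX, map_inv_of_isUnit _ hY, e3, e4, e1, e2, ← hXdef, ← hYdef, hPdef]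
    simp only [Matrix.mul_assoc]
  rw [hM] at hμ
  obtain ⟨v, hv, hveq⟩ := exists_eigvec _ hμ
  -- multiply eigen-equation by G
  have hSv : (Xᴴ * P * X) *ᵥ v = μ • (G *ᵥ v) := by
    have h := congrArg (fun z => G *ᵥ z) hveq
    simp only [Matrix.mulVec_smul, Matrix.mulVec_mulVec] at h
    rw [← Matrix.mul_assoc, Matrix.mul_nonsing_inv G hGdet, Matrix.one_mul] at h
    exact h
  set w : Fin N → ℂ := X *ᵥ v with hwdef
  clear_value w
  set u : Fin N → ℂ := P *ᵥ w with hudef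
  clear_value u
  -- P is hermitian idempotent
  have hPH : Pᴴ = P := by
    rw [hPdef]
    simp only [Matrix.conjTranspose_mul, Matrix.conjTranspose_conjTranspose,
      Matrix.conjTranspose_nonsing_inv]
    have hHH : Hᴴ = H := by rw [hHdef]; simp [Matrix.conjTranspose_mul]
    rw [hHH, Matrix.mul_assoc]
  have hPP : P * P = P := by
    rw [hPdef]
    have h1 : Yᴴ * (Y * H⁻¹) = 1 := by
      rw [← Matrix.mul_assoc, ← hHdef, Matrix.mul_nonsing_inv H hHdet]
    calc Y * H⁻¹ * Yᴴ * (Y * H⁻¹ * Yᴴ) = Y * H⁻¹ * (Yᴴ * (Y * H⁻¹)) * Yᴴ := by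
          simp only [Matrix.mul_assoc]
      _ = Y * H⁻¹ * Yᴴ := by rw [h1, Matrix.mul_one]
  have hPu : P *ᵥ u = u := by rw [hudef, Matrix.mulVec_mulVec, hPP]
  -- dot product identities
  have hwu : star w ⬝ᵥ u = star u ⬝ᵥ u := by
    have h := dot_adj P w u
    rw [← hudef, hPH, hPu] at h
    exact h.symm
  have huw : star u ⬝ᵥ w = star u ⬝ᵥ u := by
    have h := dot_adj P w w
    rw [hPH, ← hudef] at h
    rw [h, hwu]
  have hb : star v ⬝ᵥ (G *ᵥ v) = star w ⬝ᵥ w := by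
    have h := dot_adj X v w
    rw [← hwdef] at h
    have h2 : G *ᵥ v = Xᴴ *ᵥ w := by rw [hwdef, Matrix.mulVec_mulVec, hGdef]
    rw [h2, ← h]
  have ha : star v ⬝ᵥ ((Xᴴ * P * X) *ᵥ v) = star u ⬝ᵥ u := by
    have hs : (Xᴴ * P * X) *ᵥ v = Xᴴ *ᵥ u := by
      rw [hudef, hwdef, Matrix.mulVec_mulVec, Matrix.mulVec_mulVec, Matrix.mul_assoc]
    have h := dot_adj X v u
    rw [← hwdef] at h
    rw [hs, ← h, hwu]
  -- a = μ * b
  have hab : star u ⬝ᵥ u = μ * (star w ⬝ᵥ w) := by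
    rw [← ha, hSv, dotProduct_smul, hb, smul_eq_mul]
  -- b - a = ‖w - u‖²
  have hdiff : star (w - u) ⬝ᵥ (w - u) = star w ⬝ᵥ w - star u ⬝ᵥ u := by
    simp only [star_sub, sub_dotProduct, dotProduct_sub, huw, hwu]
    ring
  -- positivity facts
  obtain ⟨haim, hare, -⟩ := self_dot N u
  obtain ⟨hbim, hbre, hbz⟩ := self_dot N w
  obtain ⟨hdim, hdre, -⟩ := self_dot N (w - u)
  -- w ≠ 0
  have hw0 : w ≠ 0 := by
    intro h0
    apply hv
    have h1 : G *ᵥ v = 0 := by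
      rw [hGdef, ← Matrix.mulVec_mulVec, ← hwdef, h0, Matrix.mulVec_zero]
    have h2 := congrArg (fun z => G⁻¹ *ᵥ z) h1
    simpa [Matrix.mulVec_mulVec, Matrix.nonsing_inv_mul G hGdet] using h2
  have hbpos : 0 < (star w ⬝ᵥ w).re := by
    rcases lt_or_eq_of_le hbre with h | h
    · exact h
    · exact absurd (hbz h.symm) hw0
  have hb_eq : (star w ⬝ᵥ w : ℂ) = ((star w ⬝ᵥ w).re : ℂ) :=
    Complex.ext rfl (by simp [hbim])
  have him : μ.im = 0 := by
    have h := congrArg Complex.im hab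
    rw [haim, hb_eq] at h
    simp only [Complex.mul_im, Complex.ofReal_re, Complex.ofReal_im, mul_zero, add_zero, zero_add] at h
    rcases mul_eq_zero.mp h.symm with h' | h'
    · exact h'
    · exact absurd h' (ne_of_gt hbpos)
  have hre : μ.re * (star w ⬝ᵥ w).re = (star u ⬝ᵥ u).re := by
    have h := congrArg Complex.re hab
    rw [hb_eq] at h
    simp only [Complex.mul_re, Complex.ofReal_re, Complex.ofReal_im, mul_zero, sub_zero] at h
    linarith [h]
  have hd : (star u ⬝ᵥ u).re ≤ (star w ⬝ᵥ w).re := by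
    have h := congrArg Complex.re hdiff
    simp only [Complex.sub_re] at h
    linarith
  set A : ℝ := (star u ⬝ᵥ u).re with hAdef
  set B : ℝ := (star w ⬝ᵥ w).re with hBdef
  clear_value A B
  clear hμ hM hveq hSv hab hdiff hb ha huw hwu hb_eq hPu hPH hPP hbz hw0 hv e1 e2 e3 e4 hGu hHu hGdet hHdet hGdef hHdef hPdef hXdef hYdef hwdef hudef hX hY hbim haim hdim hdre
  clear hAdef hBdef
  clear v w u P H G X Y ΦX ΦY
  refine ⟨him, ?_, ?_⟩
  · by_contra hneg
    push_neg at hneg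
    nlinarith [hre, hare, hbpos]
  · by_contra hgt
    push_neg at hgt
    nlinarith [hre, hd, hbpos]
end
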